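/- Let n ≥ 2, let N ≥ 2, let 1 ≤ i < j ≤ N, let σ be the transposition (i j) of {1,…,N}, and let Λ_1, …, Λ_{n²−1} be n×n complex matrices that are Hermitian, traceless, and satisfy Tr(Λ_a Λ_b) = 2δ_{ab} for all a, b. Then the tensor transposition matrix satisfies U_{n^{⊗N}}(σ) = (1/n) I_n^{⊗N} + (1/2) Σ_{a=1}^{n²−1} M_a, where M_a is the Kronecker product of N factors each equal to I_n except that the i-th and the j-th factors are both equal to Λ_a, and I_n^{⊗N} denotes the Kronecker product of N copies of the n×n identity matrix. -/

import Mathlib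

/-!
The identity and the `Λ_a` are pairwise trace-orthogonal with nonzero norms, hence a basis of the
`n²`-dimensional space of `n × n` matrices. Expanding the matrix units in this basis gives the
completeness relation `δ_ps δ_qr = (1/n) δ_pq δ_rs + (1/2) Σ_a (Λ_a)_pq (Λ_a)_rs`. The entry of
`U(σ)` at `(x, y)` is `∏_t δ(x_t, y_σ(t))`; all three products in the claim share the factor
`∏_{t ≠ i, j} δ(x_t, y_t)`, and what remains at the positions `i, j` is the completeness relation.
-/

open Matrix

/-- `U` is the tensor permutation matrix `U_{n^{⊗N}}(σ)`: the unique `n^N × n^N` complex matrix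
with `U · (a_1 ⊗ ⋯ ⊗ a_N) = a_{σ(1)} ⊗ ⋯ ⊗ a_{σ(N)}` for all column vectors `a_t ∈ ℂ^n`.
A vector of `(ℂ^n)^{⊗N}` is encoded as a function on `Fin N → Fin n`, the Kronecker product
`a_1 ⊗ ⋯ ⊗ a_N` being `fun x => ∏ t, a t (x t)`. -/
def IsTensorPermMatrix (n N : ℕ) (σ : Equiv.Perm (Fin N))
    (U : Matrix (Fin N → Fin n) (Fin N → Fin n) ℂ) : Prop :=
  ∀ a : Fin N → (Fin n → ℂ),
    U.mulVec (fun x => ∏ t, a t (x t)) = fun x => ∏ t, a (σ t) (x t)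

section Completeness

variable {K m ι : Type*} [Field K] [CharZero K] [Fintype m] [DecidableEq m]
  [DecidableEq ι] (Λ : ι → Matrix m m K)

theorem linearIndependent_option_elim_one [Nonempty m] (htrace : ∀ a, (Λ a).trace = 0)
    (horth : ∀ a b, (Λ a * Λ b).trace = if a = b then 2 else 0) :
    LinearIndependent K (fun k : Option ι => k.elim 1 Λ) := by
  let B : LinearMap.BilinForm K (Matrix m m K) :=
    (LinearMap.mul K (Matrix m m K)).compr₂ (traceLinearMap m K K)
  have hB : ∀ X Y, B X Y = (X * Y).trace := fun _ _ => rfl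
  refine LinearMap.BilinForm.linearIndependent_of_iIsOrtho (B := B) ?_ ?_
  · rw [LinearMap.BilinForm.iIsOrtho_def]
    rintro (_ | a) (_ | b) hab <;> simp_all
  · rintro (_ | a) <;> simp [hB, horth]

variable [Fintype ι]

theorem eq_trace_smul_one_add_sum_trace_smul (hcard : Fintype.card ι + 1 = Fintype.card m ^ 2)
    (htrace : ∀ a, (Λ a).trace = 0)
    (horth : ∀ a b, (Λ a * Λ b).trace = if a = b then 2 else 0) (X : Matrix m m K) :
    X = ((Fintype.card m : K)⁻¹ * X.trace) • (1 : Matrix m m K)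
      + (2⁻¹ : K) • ∑ a, (Λ a * X).trace • Λ a := by
  have hm : Fintype.card m ≠ 0 := by rintro h; simp [h] at hcard
  have : Nonempty m := Fintype.card_pos_iff.mp (Nat.pos_of_ne_zero hm)
  have hspan : Submodule.span K (Set.range fun k : Option ι => k.elim 1 Λ) = ⊤ :=
    (linearIndependent_option_elim_one Λ htrace horth).span_eq_top_of_card_eq_finrank <| by
      simp [Module.finrank_matrix, hcard, sq]
  let T : Matrix m m K →ₗ[K] Matrix m m K :=
    (Fintype.card m : K)⁻¹ • (traceLinearMap m K K).smulRight 1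
      + (2⁻¹ : K) • ∑ a, (traceLinearMap m K K ∘ₗ LinearMap.mulLeft K (Λ a)).smulRight (Λ a)
  have hT : LinearMap.id = T := by
    refine LinearMap.ext_on_range hspan ?_
    rintro (_ | b)
    · simp [T, htrace, hm]
    · simp [T, htrace, horth]
  simpa [T, mul_smul] using LinearMap.congr_fun hT X

theorem gellMann_completeness (hcard : Fintype.card ι + 1 = Fintype.card m ^ 2)
    (htrace : ∀ a, (Λ a).trace = 0)
    (horth : ∀ a b, (Λ a * Λ b).trace = if a = b then 2 else 0) (p q r s : m) :
    (1 : Matrix m m K) p s * (1 : Matrix m m K) r q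
      = (Fintype.card m : K)⁻¹ * ((1 : Matrix m m K) p q * (1 : Matrix m m K) r s)
        + 2⁻¹ * ∑ a, Λ a p q * Λ a r s := by
  have h := congr_fun₂ (eq_trace_smul_one_add_sum_trace_smul Λ hcard htrace horth
    (single q p 1)) r s
  obtain rfl | hpq := eq_or_ne p q
  · simp [trace_mul_single, one_apply, single_apply, Matrix.sum_apply] at h ⊢
    grind
  · simp [trace_mul_single, one_apply, single_apply, Matrix.sum_apply, hpq, hpq.symm] at h ⊢
    grind

end Completeness

theorem Matrix.prod_one_apply {ι m R : Type*} [Fintype ι] [DecidableEq m] [CommSemiring R]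
    (x y : ι → m) :
    ∏ t, (1 : Matrix m m R) (x t) (y t) = (1 : Matrix (ι → m) (ι → m) R) x y := by
  simp [one_apply, Finset.prod_boole, funext_iff]

theorem IsTensorPermMatrix.apply {n N : ℕ} {σ : Equiv.Perm (Fin N)}
    {U : Matrix (Fin N → Fin n) (Fin N → Fin n) ℂ} (hU : IsTensorPermMatrix n N σ U)
    (x y : Fin N → Fin n) :
    U x y = ∏ t, (1 : Matrix (Fin n) (Fin n) ℂ) (x t) (y (σ t)) := by
  have h := congr_fun (hU fun t k => (1 : Matrix (Fin n) (Fin n) ℂ) k (y t)) x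
  simp only [prod_one_apply] at h
  rw [prod_one_apply x fun t => y (σ t)]
  simpa [mulVec, dotProduct, one_apply] using h

theorem Fintype.prod_eq_mul_mul_prod_compl_pair {α M : Type*} [Fintype α] [DecidableEq α]
    [CommMonoid M] {i j : α} (hij : i ≠ j) (f : α → M) :
    ∏ t, f t = f i * f j * ∏ t ∈ {i, j}ᶜ, f t := by
  rw [← Finset.prod_pair hij, Finset.prod_mul_prod_compl]

theorem tensor_transposition_eq_gellMann_sum_general (n N : ℕ) (hn : 2 ≤ n)
    (i j : Fin N) (hij : i < j)
    (Λ : Fin (n ^ 2 - 1) → Matrix (Fin n) (Fin n) ℂ)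
    (htrace : ∀ a, (Λ a).trace = 0)
    (horth : ∀ a b, (Λ a * Λ b).trace = if a = b then 2 else 0)
    (U : Matrix (Fin N → Fin n) (Fin N → Fin n) ℂ)
    (hU : IsTensorPermMatrix n N (Equiv.swap i j) U) :
    U = ((1 : ℂ) / (n : ℂ)) •
          Matrix.of (fun x y : Fin N → Fin n =>
            ∏ t, (1 : Matrix (Fin n) (Fin n) ℂ) (x t) (y t))
        + ((1 : ℂ) / 2) • ∑ a,
            Matrix.of (fun x y : Fin N → Fin n =>
              ∏ t, (if t = i ∨ t = j then Λ a else (1 : Matrix (Fin n) (Fin n) ℂ))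
                (x t) (y t)) := by
  have hcard : Fintype.card (Fin (n ^ 2 - 1)) + 1 = Fintype.card (Fin n) ^ 2 := by
    simp [Nat.sub_add_cancel (Nat.one_le_pow _ _ (by omega : 0 < n))]
  have hne := hij.ne
  ext x y
  set P := ∏ t ∈ {i, j}ᶜ, (1 : Matrix (Fin n) (Fin n) ℂ) (x t) (y t)
  have hrest : ∀ t ∈ ({i, j}ᶜ : Finset (Fin N)), t ≠ i ∧ t ≠ j := by simp
  have hU' : U x y =
      (1 : Matrix (Fin n) (Fin n) ℂ) (x i) (y j) * (1 : Matrix (Fin n) (Fin n) ℂ) (x j) (y i) * P := by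
    rw [hU.apply, Fintype.prod_eq_mul_mul_prod_compl_pair hne, Equiv.swap_apply_left,
      Equiv.swap_apply_right]
    congr 1
    refine Finset.prod_congr rfl fun t ht => ?_
    rw [Equiv.swap_apply_of_ne_of_ne (hrest t ht).1 (hrest t ht).2]
  have hM : ∀ a, ∏ t, (if t = i ∨ t = j then Λ a else 1) (x t) (y t)
      = Λ a (x i) (y i) * Λ a (x j) (y j) * P := by
    intro a
    rw [Fintype.prod_eq_mul_mul_prod_compl_pair hne, if_pos (Or.inl rfl), if_pos (Or.inr rfl)]
    congr 1
    refine Finset.prod_congr rfl fun t ht => ?_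
    rw [if_neg (not_or.2 (hrest t ht))]
  have hcompl := gellMann_completeness Λ hcard htrace horth (x i) (y i) (x j) (y j)
  rw [Fintype.card_fin] at hcompl
  simp only [Matrix.add_apply, Matrix.smul_apply, of_apply, Matrix.sum_apply, smul_eq_mul, hU', hM,
    Fintype.prod_eq_mul_mul_prod_compl_pair hne fun t => (1 : Matrix (Fin n) (Fin n) ℂ) (x t) (y t)]
  rw [← Finset.sum_mul]
  linear_combination P * hcompl

/-- Let `n, N ≥ 2`, let `i < j` in `{1, …, N}`, let `σ` be the transposition
`(i j)`, and let `Λ_1, …, Λ_{n²-1}` be `n × n` complex matrices that are Hermitian, traceless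
and satisfy `Tr(Λ_a Λ_b) = 2 δ_{ab}` (generalized Gell-Mann matrices).  Then the tensor
transposition matrix satisfies `U_{n^{⊗N}}(σ) = (1/n) Iₙ^{⊗N} + (1/2) Σ_a M_a`, where `M_a`
is the Kronecker product of `N` factors all equal to `Iₙ` except that the `i`-th and `j`-th
factors are both `Λ_a`. -/
theorem tensor_transposition_eq_gellMann_sum (n N : ℕ) (hn : 2 ≤ n) (hN : 2 ≤ N)
    (i j : Fin N) (hij : i < j)
    (Λ : Fin (n ^ 2 - 1) → Matrix (Fin n) (Fin n) ℂ)
    (hherm : ∀ a, (Λ a).IsHermitian)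
    (htrace : ∀ a, (Λ a).trace = 0)
    (horth : ∀ a b, (Λ a * Λ b).trace = if a = b then 2 else 0)
    (U : Matrix (Fin N → Fin n) (Fin N → Fin n) ℂ)
    (hU : IsTensorPermMatrix n N (Equiv.swap i j) U) :
    U = ((1 : ℂ) / (n : ℂ)) •
          Matrix.of (fun x y : Fin N → Fin n =>
            ∏ t, (1 : Matrix (Fin n) (Fin n) ℂ) (x t) (y t))
        + ((1 : ℂ) / 2) • ∑ a,
            Matrix.of (fun x y : Fin N → Fin n =>
              ∏ t, (if t = i ∨ t = j then Λ a else (1 : Matrix (Fin n) (Fin n) ℂ))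
                (x t) (y t)) :=
  tensor_transposition_eq_gellMann_sum_general n N hn i j hij Λ htrace horth U hU
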